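/- arXiv:2405.01049 — 3 statements merged into one kernel-verified Lean document; each statement's English description precedes it below -/
import Mathlib

section
/- The operators T_i of the polynomial representation of the finite Hecke algebra satisfy the braid relation: for 1 ≤ i ≤ n−2 and all f ∈ ℚ(t)[x_1,...,x_n], T_i(T_{i+1}(T_i(f))) = T_{i+1}(T_i(T_{i+1}(f))). -/
/-!
Since `X a - X b` is a nonzero divisor, its defining relation determines `T_i` completely: in the
fraction field `K` of the polynomial ring it reads `T_i = s + q x (1 - s) / (x - y)`, where `s` is
the field automorphism induced by the transposition and `q = 1 - t`. Both sides of the braid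
relation are then explicit `K`-linear combinations of the six permuted images of `f`, with
`s u s f = u s u f`, and comparing coefficients is an identity of rational functions in
`x, y, z, q`.
-/

open MvPolynomial

section DemazureLusztig

variable {K : Type*} [Field K]

def demazureLusztig (s : K →+* K) (q x y φ : K) : K :=
  s φ + q * x * (φ - s φ) / (x - y)

theorem algebraMap_eq_demazureLusztig {A : Type*} [CommRing A] [Algebra A K]
    [IsFractionRing A K] {s : K →+* K} {q x y f sf g : A}
    (hs : s (algebraMap A K f) = algebraMap A K sf) (hxy : x ≠ y)
    (h : (x - y) * (g - sf) = q * x * (f - sf)) :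
    algebraMap A K g = demazureLusztig s (algebraMap A K q) (algebraMap A K x)
      (algebraMap A K y) (algebraMap A K f) := by
  have hxy' : algebraMap A K x - algebraMap A K y ≠ 0 :=
    sub_ne_zero.2 ((IsFractionRing.injective A K).ne hxy)
  rw [demazureLusztig, hs, ← sub_eq_iff_eq_add', eq_div_iff hxy']
  simpa [mul_comm] using congrArg (algebraMap A K) h

theorem demazureLusztig_braid {s u : K →+* K} (hs : Function.Involutive s)
    (hu : Function.Involutive u) (hsu : ∀ φ, s (u (s φ)) = u (s (u φ))) {q x y z : K}
    (hsq : s q = q) (huq : u q = q) (hsx : s x = y) (hsy : s y = x) (hsz : s z = z)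
    (hux : u x = x) (huy : u y = z) (huz : u z = y)
    (hxy : x ≠ y) (hyz : y ≠ z) (hxz : x ≠ z) (φ : K) :
    demazureLusztig s q x y (demazureLusztig u q y z (demazureLusztig s q x y φ)) =
      demazureLusztig u q y z (demazureLusztig s q x y (demazureLusztig u q y z φ)) := by
  simp only [demazureLusztig, map_add, map_sub, map_mul, map_div₀, hs _, hu _, hsu,
    hsq, huq, hsx, hsy, hsz, hux, huy, huz]
  field_simp
  ring

end DemazureLusztig

theorem Equiv.swap_mul_swap_mul_swap_braid {α : Type*} [DecidableEq α] {a b c : α}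
    (hab : a ≠ b) (hbc : b ≠ c) (hac : a ≠ c) :
    swap a b * swap b c * swap a b = swap b c * swap a b * swap b c := by
  rw [swap_mul_swap_mul_swap hab hac, swap_comm a b, swap_comm b c,
    swap_mul_swap_mul_swap hbc.symm hac.symm, swap_comm]

namespace MvPolynomial

section RenameFrac

variable {ι : Type*} (R : Type*) [CommRing R] (K : Type*) [Field K]
  [Algebra (MvPolynomial ι R) K] [IsFractionRing (MvPolynomial ι R) K]

noncomputable def renameFrac (σ : Equiv.Perm ι) : K ≃+* K :=
  IsFractionRing.ringEquivOfRingEquiv (renameEquiv R σ).toRingEquiv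

variable {R K}

@[simp]
theorem renameFrac_algebraMap (σ : Equiv.Perm ι) (p : MvPolynomial ι R) :
    renameFrac R K σ (algebraMap _ K p) = algebraMap _ K (rename σ p) :=
  IsFractionRing.ringEquivOfRingEquiv_algebraMap _ p

theorem renameFrac_renameFrac (σ τ : Equiv.Perm ι) (φ : K) :
    renameFrac R K σ (renameFrac R K τ φ) = renameFrac R K (σ * τ) φ := by
  obtain ⟨p, r, -, rfl⟩ := IsFractionRing.div_surjective (MvPolynomial ι R) φ
  simp [map_div₀, rename_rename, Equiv.Perm.coe_mul]

theorem renameFrac_one (φ : K) : renameFrac R K (1 : Equiv.Perm ι) φ = φ := by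
  obtain ⟨p, r, -, rfl⟩ := IsFractionRing.div_surjective (MvPolynomial ι R) φ
  simp [map_div₀]

variable [DecidableEq ι]

theorem renameFrac_swap_involutive (i j : ι) :
    Function.Involutive (renameFrac R K (Equiv.swap i j)) := fun φ => by
  rw [renameFrac_renameFrac, Equiv.swap_mul_self, renameFrac_one]

theorem renameFrac_swap_braid {a b c : ι} (hab : a ≠ b) (hbc : b ≠ c) (hac : a ≠ c) (φ : K) :
    renameFrac R K (Equiv.swap a b) (renameFrac R K (Equiv.swap b c)
      (renameFrac R K (Equiv.swap a b) φ)) =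
    renameFrac R K (Equiv.swap b c) (renameFrac R K (Equiv.swap a b)
      (renameFrac R K (Equiv.swap b c) φ)) := by
  simp only [renameFrac_renameFrac, ← mul_assoc, Equiv.swap_mul_swap_mul_swap_braid hab hbc hac]

end RenameFrac

end MvPolynomial

/-- The Hecke operators `T_i` on `ℚ(t)[x_1,...,x_n]` satisfy the braid relation
`T_i T_{i+1} T_i = T_{i+1} T_i T_{i+1}`. Here `a,b,c` are the consecutive
positions `i, i+1, i+2`, `Ti` acts on the pair `(a,b)` and `Ti1` on `(b,c)`. -/
theorem hecke_braid (n : ℕ) (a b c : Fin n)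
    (hab : (b : ℕ) = (a : ℕ) + 1) (hbc : (c : ℕ) = (b : ℕ) + 1)
    (Ti Ti1 : MvPolynomial (Fin n) (RatFunc ℚ) → MvPolynomial (Fin n) (RatFunc ℚ))
    (hTi : ∀ f, (X a - X b) * (Ti f - rename (Equiv.swap a b) f)
      = (1 - C RatFunc.X) * X a * (f - rename (Equiv.swap a b) f))
    (hTi1 : ∀ f, (X b - X c) * (Ti1 f - rename (Equiv.swap b c) f)
      = (1 - C RatFunc.X) * X b * (f - rename (Equiv.swap b c) f))
    (f : MvPolynomial (Fin n) (RatFunc ℚ)) :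
    Ti (Ti1 (Ti f)) = Ti1 (Ti (Ti1 f)) := by
  have hab' : a ≠ b := Fin.ne_of_val_ne (by omega)
  have hbc' : b ≠ c := Fin.ne_of_val_ne (by omega)
  have hac' : a ≠ c := Fin.ne_of_val_ne (by omega)
  let K := FractionRing (MvPolynomial (Fin n) (RatFunc ℚ))
  let ι := algebraMap (MvPolynomial (Fin n) (RatFunc ℚ)) K
  let s : K →+* K := renameFrac (RatFunc ℚ) K (Equiv.swap a b)
  let u : K →+* K := renameFrac (RatFunc ℚ) K (Equiv.swap b c)
  have hι {i j : Fin n} (hij : i ≠ j) : ι (X i) ≠ ι (X j) :=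
    (IsFractionRing.injective _ K).ne (X_injective.ne hij)
  have hTi' (g) : ι (Ti g) = demazureLusztig s (ι (1 - C RatFunc.X)) (ι (X a)) (ι (X b)) (ι g) :=
    algebraMap_eq_demazureLusztig (renameFrac_algebraMap _ _) (X_injective.ne hab') (hTi g)
  have hTi1' (g) : ι (Ti1 g) = demazureLusztig u (ι (1 - C RatFunc.X)) (ι (X b)) (ι (X c)) (ι g) :=
    algebraMap_eq_demazureLusztig (renameFrac_algebraMap _ _) (X_injective.ne hbc') (hTi1 g)
  apply IsFractionRing.injective _ K
  rw [hTi', hTi1', hTi', hTi1', hTi', hTi1']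
  refine demazureLusztig_braid (renameFrac_swap_involutive (R := RatFunc ℚ) a b)
    (renameFrac_swap_involutive (R := RatFunc ℚ) b c)
    (renameFrac_swap_braid (R := RatFunc ℚ) hab' hbc' hac') ?_ ?_ ?_ ?_ ?_ ?_ ?_ ?_ (hι hab') (hι hbc') (hι hac') _
    <;> simp +zetaDelta [Equiv.swap_apply_of_ne_of_ne, hab', hac', hbc'.symm, hac'.symm]
end

section
/- If α ∈ ℤ_{≥0}^n has strictly increasing entries α_i < α_{i+1} < ... < α_j on an interval 1 ≤ i < j ≤ n, then the key polynomial K_α(x_1,...,x_n) is symmetric in the variables x_i, x_{i+1}, ..., x_j; in particular ξ_k(K_α) = K_α for all i ≤ k ≤ j−1. -/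
open MvPolynomial in
/-- A family of key polynomials for `n` variables: `K α = x^α` when `α` is weakly
decreasing, and `K (s_i α) = ξ_i (K α)` when `α_i > α_{i+1}`, where `ξ_i` is the
isobaric divided difference operator (characterized by multiplication by
`x_i - x_{i+1}`). These properties determine `K` uniquely. -/
def IsKeyFamily (n : ℕ) (K : (Fin n → ℕ) → MvPolynomial (Fin n) ℚ) : Prop :=
  (∀ α : Fin n → ℕ, Antitone α → K α = ∏ i, X i ^ α i) ∧
  (∀ (α : Fin n → ℕ) (a b : Fin n), (b : ℕ) = (a : ℕ) + 1 → α b < α a →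
    (X a - X b) * K (α ∘ Equiv.swap a b)
      = X a * K α - X b * rename (Equiv.swap a b) (K α))

/-!
Write `e` for the transposition of two adjacent positions `p < q` with `α p < α q`, and put
`β = α ∘ e`. Since `β q < β p`, the defining recursion of the key family expresses `K α` as
`ξ_p (K β)`, i.e. `(x_p - x_q) K_α = x_p K_β - x_q e(K_β)`. Applying `e` to this identity
negates its right-hand side, so `(x_p - x_q) e(K_α) = (x_p - x_q) K_α` and `K_α` is
`e`-symmetric. On an `e`-symmetric polynomial `ξ_p` acts as the identity.
-/

open MvPolynomial

namespace MvPolynomial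

variable {σ R : Type*} [CommRing R]

theorem X_sub_X_ne_zero [Nontrivial R] {a b : σ} (hab : a ≠ b) :
    (X a - X b : MvPolynomial σ R) ≠ 0 :=
  sub_ne_zero_of_ne fun h => hab (X_injective h)

variable [IsDomain R] [DecidableEq σ]

theorem rename_swap_eq_of_X_sub_X_mul_eq {a b : σ} (hab : a ≠ b) {f h : MvPolynomial σ R}
    (hf : (X a - X b) * f = X a * h - X b * rename (Equiv.swap a b) h) :
    rename (Equiv.swap a b) f = f := by
  have hswap := congrArg (rename (Equiv.swap a b)) hf
  simp only [map_mul, map_sub, rename_X, rename_rename, Equiv.swap_apply_left,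
    Equiv.swap_apply_right] at hswap
  rw [show ⇑(Equiv.swap a b) ∘ ⇑(Equiv.swap a b) = id from _root_.funext (Equiv.swap_apply_self a b),
    rename_id, AlgHom.id_apply] at hswap
  refine mul_left_cancel₀ (X_sub_X_ne_zero hab) ?_
  linear_combination -hswap - hf

theorem eq_of_X_sub_X_mul_eq_of_rename_swap_eq {a b : σ} (hab : a ≠ b) {f g : MvPolynomial σ R}
    (hsymm : rename (Equiv.swap a b) f = f)
    (hg : (X a - X b) * g = X a * f - X b * rename (Equiv.swap a b) f) : g = f :=
  mul_left_cancel₀ (X_sub_X_ne_zero hab) (by rw [hg, hsymm]; ring)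

end MvPolynomial

theorem IsKeyFamily.rename_swap_eq {n : ℕ} {K : (Fin n → ℕ) → MvPolynomial (Fin n) ℚ}
    (hK : IsKeyFamily n K) {α : Fin n → ℕ} {p q : Fin n} (hpq : (q : ℕ) = (p : ℕ) + 1)
    (hα : α p < α q) : rename (Equiv.swap p q) (K α) = K α := by
  have hswap : (α ∘ Equiv.swap p q) ∘ Equiv.swap p q = α :=
    funext fun x => congrArg α (Equiv.swap_apply_self p q x)
  have hrec := hK.2 (α ∘ Equiv.swap p q) p q hpq (by simpa using hα)
  rw [hswap] at hrec
  exact rename_swap_eq_of_X_sub_X_mul_eq (Fin.ne_of_val_ne (by omega)) hrec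

theorem key_symmetric_on_increasing_interval_general (n : ℕ)
    (K : (Fin n → ℕ) → MvPolynomial (Fin n) ℚ) (hK : IsKeyFamily n K)
    (α : Fin n → ℕ) (i j : Fin n)
    (hinc : ∀ p q : Fin n, i ≤ p → p < q → q ≤ j → α p < α q) :
    ∀ p q : Fin n, i ≤ p → (q : ℕ) = (p : ℕ) + 1 → q ≤ j →
      rename (Equiv.swap p q) (K α) = K α ∧
      ∀ g : MvPolynomial (Fin n) ℚ,
        (X p - X q) * g = X p * K α - X q * rename (Equiv.swap p q) (K α) →
        g = K α := by
  intro p q hip hpq hqj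
  have hlt : p < q := Fin.lt_def.mpr (by omega)
  have hsymm := hK.rename_swap_eq hpq (hinc p q hip hlt hqj)
  exact ⟨hsymm, fun g hg => eq_of_X_sub_X_mul_eq_of_rename_swap_eq hlt.ne hsymm hg⟩

/-- If `α` is strictly increasing on the interval `[i, j]`, then `K_α` is symmetric
in the variables `x_i, ..., x_j`; in particular `ξ_p (K_α) = K_α` for every adjacent
pair `p, p+1` in the interval. -/
theorem key_symmetric_on_increasing_interval (n : ℕ)
    (K : (Fin n → ℕ) → MvPolynomial (Fin n) ℚ) (hK : IsKeyFamily n K)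
    (α : Fin n → ℕ) (i j : Fin n) (hij : i < j)
    (hinc : ∀ p q : Fin n, i ≤ p → p < q → q ≤ j → α p < α q) :
    ∀ p q : Fin n, i ≤ p → (q : ℕ) = (p : ℕ) + 1 → q ≤ j →
      rename (Equiv.swap p q) (K α) = K α ∧
      ∀ g : MvPolynomial (Fin n) ℚ,
        (X p - X q) * g = X p * K α - X q * rename (Equiv.swap p q) (K α) →
        g = K α :=
  key_symmetric_on_increasing_interval_general n K hK α i j hinc
end

section
/- The partial Weyl symmetrizer satisfies the recursion W_k^{(n)} = ξ_{n−1}···ξ_{k+1} ∘ W_{k+1}^{(n)}: for any polynomial f ∈ ℚ[x_1,...,x_n] and 0 ≤ k ≤ n−1, W_k^{(n)}(f) = ξ_{n−1}(ξ_{n−2}(···ξ_{k+1}(W_{k+1}^{(n)}(f))···)). -/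
open MvPolynomial in
/-- The partial Weyl symmetrizer `W_k^{(n)}` on `ℚ[x_1,...,x_n]` (0-indexed
variables), characterized by
`(∏_{k ≤ i < j} (x_i - x_j)) · W f = Σ_σ (-1)^{ℓ(σ)} σ(x^{δ_k} f)`,
where `σ` ranges over the permutations of `{0,...,n-1}` fixing `0,...,k-1`
pointwise and `δ_k = (0^k, n-k-1, ..., 1, 0)`. -/
def IsWeylSym (n k : ℕ)
    (W : MvPolynomial (Fin n) ℚ → MvPolynomial (Fin n) ℚ) : Prop :=
  ∀ f, (∏ p ∈ Finset.univ.filter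
        (fun p : Fin n × Fin n => k ≤ (p.1 : ℕ) ∧ p.1 < p.2), (X p.1 - X p.2)) * W f
    = ∑ σ ∈ Finset.univ.filter
        (fun σ : Equiv.Perm (Fin n) => ∀ i : Fin n, (i : ℕ) < k → σ i = i),
        (Equiv.Perm.sign σ : ℤ) •
          rename σ ((∏ j : Fin n,
            X j ^ (if (j : ℕ) < k then 0 else n - 1 - (j : ℕ))) * f)

/-!
Put `G = W_{k+1} f`, `Δ_c = ∏_{c ≤ i < j} (x_i - x_j)` and `e = n - 1 - k`. Since `Δ_{k+1}` and the
antisymmetrizer over the permutations fixing `0, …, k` are both anti-invariant, `G` is symmetric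
in `x_{k+1}, …, x_{n-1}`. Splitting the antisymmetrizer over the permutations fixing `0, …, k-1`
along the cosets `(k r) · {σ fixing 0, …, k}`, `r ≥ k`, and dividing by `Δ_k` gives, in the
fraction field,
`W_k f = Σ_{r ≥ k} x_r^e (k r)G / ∏_{j ≥ k, j ≠ r} (x_r - x_j)`,
a divided difference at the nodes `x_k, …, x_{n-1}`. On the other side, `ξ_t` takes the divided
difference at `x_k, …, x_t` of the data `x_r^{t-k} (k r)G` to the one at `x_k, …, x_{t+1}` of
`x_r^{t+1-k} (k r)G`, by the recursion
`(x_a - x_b) [a, b, S](x d) = x_a [a, S](d) - x_b [b, S](d)`;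
the symmetry of `G` is what makes `s_t` act on the data by permuting the nodes. Starting from
`G = [k](G)` and applying `ξ_k, …, ξ_{n-2}` gives the same expression.
-/

open Finset MvPolynomial Equiv

section DividedDifference

variable {ι K L : Type*} [DecidableEq ι] [Field K] [Field L]

noncomputable def dividedDifference (x d : ι → K) (T : Finset ι) : K :=
  ∑ r ∈ T, d r / ∏ j ∈ T.erase r, (x r - x j)

lemma dividedDifference_singleton (x d : ι → K) (a : ι) :
    dividedDifference x d {a} = d a := by
  simp [dividedDifference]

lemma map_dividedDifference {F : Type*} [FunLike F K L] [RingHomClass F K L] (φ : F)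
    (x d : ι → K) (T : Finset ι) :
    φ (dividedDifference x d T) = dividedDifference (φ ∘ x) (φ ∘ d) T := by
  simp [dividedDifference, map_sum, map_div₀, map_prod, map_sub]

lemma dividedDifference_congr (x : ι → K) {d d' : ι → K} {T : Finset ι}
    (hd : ∀ i ∈ T, d i = d' i) :
    dividedDifference x d T = dividedDifference x d' T :=
  sum_congr rfl fun r hr => by rw [hd r hr]

lemma dividedDifference_map_equiv (e : ι ≃ ι) (x d : ι → K) (T : Finset ι) :
    dividedDifference x d (T.map e.toEmbedding) = dividedDifference (x ∘ e) (d ∘ e) T := by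
  simp only [dividedDifference, sum_map, ← map_erase, prod_map]
  rfl

lemma dividedDifference_insert_insert {x : ι → K} (hx : Function.Injective x) {a b : ι}
    {S : Finset ι} (ha : a ∉ S) (hb : b ∉ S) (hab : a ≠ b) (d : ι → K) :
    (x a - x b) * dividedDifference x (x * d) (insert a (insert b S))
      = x a * dividedDifference x d (insert a S) - x b * dividedDifference x d (insert b S) := by
  have hne : ∀ {i j}, i ≠ j → x i - x j ≠ 0 := fun h => sub_ne_zero.2 (hx.ne h)
  have ha' : a ∉ insert b S := by simp [hab, ha]
  have hS : ∀ r ∈ S,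
      (x a - x b) * ((x * d) r / ∏ j ∈ (insert a (insert b S)).erase r, (x r - x j))
      = x a * (d r / ∏ j ∈ (insert a S).erase r, (x r - x j))
        - x b * (d r / ∏ j ∈ (insert b S).erase r, (x r - x j)) := by
    intro r hr
    -- `x_a (x_r - x_b) - x_b (x_r - x_a) = x_r (x_a - x_b)`
    have hra : r ≠ a := fun h => ha (h ▸ hr)
    have hrb : r ≠ b := fun h => hb (h ▸ hr)
    have hP : ∏ j ∈ S.erase r, (x r - x j) ≠ 0 :=
      prod_ne_zero_iff.2 fun j hj => hne (Ne.symm (ne_of_mem_erase hj))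
    have ha_r : a ∉ S.erase r := fun h => ha (mem_of_mem_erase h)
    have hb_r : b ∉ S.erase r := fun h => hb (mem_of_mem_erase h)
    simp only [erase_insert_of_ne hra.symm, erase_insert_of_ne hrb.symm, prod_insert ha_r,
      prod_insert hb_r, prod_insert (show a ∉ insert b (S.erase r) by simp [hab, ha_r])]
    have hra' := hne hra
    have hrb' := hne hrb
    field_simp
    simp only [Pi.mul_apply]
    ring
  have hsum := sum_congr rfl hS
  rw [← mul_sum, sum_sub_distrib, ← mul_sum, ← mul_sum] at hsum
  have hPa : ∏ j ∈ S, (x a - x j) ≠ 0 :=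
    prod_ne_zero_iff.2 fun j hj => hne fun h => ha (h ▸ hj)
  have hPb : ∏ j ∈ S, (x b - x j) ≠ 0 :=
    prod_ne_zero_iff.2 fun j hj => hne fun h => hb (h ▸ hj)
  have hA : (x a - x b) * ((x * d) a / ((x a - x b) * ∏ j ∈ S, (x a - x j)))
      = x a * (d a / ∏ j ∈ S, (x a - x j)) := by
    field_simp [hne hab]; rfl
  have hB : (x a - x b) * ((x * d) b / ((x b - x a) * ∏ j ∈ S, (x b - x j)))
      = - x b * (d b / ∏ j ∈ S, (x b - x j)) := by
    have hba := hne hab.symm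
    field_simp [hne hab]; simp only [Pi.mul_apply]; ring
  simp only [dividedDifference]
  rw [sum_insert ha', sum_insert (by simpa using hb), sum_insert ha, sum_insert hb]
  simp only [erase_insert ha', erase_insert_of_ne hab, erase_insert hb, erase_insert ha]
  rw [prod_insert hb, prod_insert ha]
  linear_combination hA + hB + hsum

end DividedDifference

section Antisymmetrizer

variable {R : Type*} [CommRing R] {n : ℕ}

def fixingLT (n c : ℕ) : Finset (Perm (Fin n)) :=
  univ.filter fun σ => ∀ i : Fin n, (i : ℕ) < c → σ i = i

variable {c : ℕ} {σ τ : Perm (Fin n)}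

lemma mem_fixingLT : σ ∈ fixingLT n c ↔ ∀ i : Fin n, (i : ℕ) < c → σ i = i := by
  simp [fixingLT]

lemma mul_mem_fixingLT (hσ : σ ∈ fixingLT n c) (hτ : τ ∈ fixingLT n c) :
    σ * τ ∈ fixingLT n c := by
  rw [mem_fixingLT] at *
  intro i hi
  rw [Perm.mul_apply, hτ i hi, hσ i hi]

lemma inv_mem_fixingLT (hσ : σ ∈ fixingLT n c) : σ⁻¹ ∈ fixingLT n c :=
  mem_fixingLT.2 fun i hi => Perm.inv_eq_iff_eq.2 (mem_fixingLT.1 hσ i hi).symm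

lemma le_apply_of_mem_fixingLT (hσ : σ ∈ fixingLT n c) {j : Fin n} (hj : c ≤ j) :
    c ≤ σ j := by
  by_contra h
  have := mem_fixingLT.1 hσ _ (not_le.1 h)
  rw [σ.injective this] at h
  exact h hj

lemma swap_mem_fixingLT {a b : Fin n} (ha : c ≤ a) (hb : c ≤ b) : swap a b ∈ fixingLT n c :=
  mem_fixingLT.2 fun i hi => swap_apply_of_ne_of_ne (by omega) (by omega)

lemma rename_rename_swap {G : MvPolynomial (Fin n) R} {s : Perm (Fin n)} {a : Fin n}
    (hsa : s a = a) (hG : rename s G = G) (j : Fin n) :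
    rename s (rename (swap a j) G) = rename (swap a (s j)) G := by
  have h : swap a (s j) * s = s * swap a j :=
    calc swap a (s j) * s = swap (s a) (s j) * s := by rw [hsa]
      _ = s * swap a j := by rw [swap_apply_apply, inv_mul_cancel_right]
  rw [rename_rename, ← Perm.coe_mul, ← h, Perm.coe_mul, ← rename_rename, hG]

variable (R) in
noncomputable def antisymmetrize (c : ℕ) (h : MvPolynomial (Fin n) R) : MvPolynomial (Fin n) R :=
  ∑ σ ∈ fixingLT n c, (Perm.sign σ : ℤ) • rename σ h

lemma rename_antisymmetrize (hτ : τ ∈ fixingLT n c) (h : MvPolynomial (Fin n) R) :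
    rename τ (antisymmetrize R c h) = (Perm.sign τ : ℤ) • antisymmetrize R c h := by
  simp only [antisymmetrize, map_sum, map_zsmul, rename_rename, smul_sum]
  refine sum_nbij' (τ * ·) (τ⁻¹ * ·) (fun σ hσ => mul_mem_fixingLT hτ hσ)
    (fun σ hσ => mul_mem_fixingLT (inv_mem_fixingLT hτ) hσ)
    (fun σ _ => inv_mul_cancel_left τ σ) (fun σ _ => mul_inv_cancel_left τ σ) (fun σ _ => ?_)
  rw [smul_smul, Perm.sign_mul, Units.val_mul, ← mul_assoc, ← Units.val_mul, Int.units_mul_self,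
    Units.val_one, one_mul]
  rfl

lemma antisymmetrize_mul_left {g : MvPolynomial (Fin n) R}
    (hg : ∀ σ ∈ fixingLT n c, rename σ g = g) (h : MvPolynomial (Fin n) R) :
    antisymmetrize R c (g * h) = g * antisymmetrize R c h := by
  simp only [antisymmetrize, mul_sum, mul_smul_comm]
  refine sum_congr rfl fun σ hσ => ?_
  rw [map_mul, hg σ hσ]

lemma antisymmetrize_eq_sum_swap (a : Fin n) (h : MvPolynomial (Fin n) R) :
    antisymmetrize R a h = ∑ r ∈ Ici a,
      (Perm.sign (swap a r) : ℤ) • rename (swap a r) (antisymmetrize R (a + 1) h) := by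
  unfold antisymmetrize
  rw [← sum_fiberwise_of_maps_to (g := fun σ : Perm (Fin n) => σ a)
    fun σ hσ => mem_Ici.2 (le_apply_of_mem_fixingLT hσ le_rfl)]
  refine sum_congr rfl fun r hr => ?_
  replace hr : a ≤ r := mem_Ici.1 hr
  simp only [map_sum, map_zsmul, rename_rename, smul_sum, smul_smul]
  refine (sum_nbij' (swap a r * ·) (swap a r * ·) (fun σ hσ => ?_) (fun τ hτ => ?_)
    (fun σ _ => swap_mul_self_mul _ _ _) (fun τ _ => swap_mul_self_mul _ _ _)
    (fun σ _ => ?_)).symm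
  · simp only [mem_filter, mem_fixingLT] at *
    refine ⟨fun i hi => ?_, by rw [Perm.mul_apply, hσ a (by simp), swap_apply_left]⟩
    rw [Perm.mul_apply, hσ i (by omega), swap_apply_of_ne_of_ne (Fin.ne_of_lt hi) (by omega)]
  · simp only [mem_filter, mem_fixingLT] at *
    intro i hi
    rcases (Nat.lt_succ_iff.1 hi).lt_or_eq with hi | hi
    · rw [Perm.mul_apply, hτ.1 i hi, swap_apply_of_ne_of_ne (Fin.ne_of_lt hi) (by omega)]
    · rw [show i = a from Fin.ext hi, Perm.mul_apply, hτ.2, swap_apply_right]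
  · rw [Perm.sign_mul, Units.val_mul]
    rfl

end Antisymmetrizer

section Vandermonde

variable {R : Type*} [CommRing R] {n c : ℕ} {σ : Perm (Fin n)}

variable (R n) in
noncomputable def partialVandermonde (c : ℕ) : MvPolynomial (Fin n) R :=
  ∏ p ∈ univ.filter (fun p : Fin n × Fin n => c ≤ (p.1 : ℕ) ∧ p.1 < p.2), (X p.1 - X p.2)

lemma partialVandermonde_eq_prod_Ioi (c : ℕ) :
    partialVandermonde R n c = ∏ i ∈ univ.filter (fun i : Fin n => c ≤ (i : ℕ)),
      ∏ j ∈ Ioi i, (X i - X j) :=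
  prod_finset_product _ _ _ (by simp)

lemma partialVandermonde_succ (a : Fin n) :
    partialVandermonde R n a = (∏ j ∈ Ioi a, (X a - X j)) * partialVandermonde R n (a + 1) := by
  have : univ.filter (fun i : Fin n => (a : ℕ) ≤ i)
      = insert a (univ.filter fun i : Fin n => (a : ℕ) + 1 ≤ i) := by
    ext i; simp [Fin.ext_iff]; omega
  rw [partialVandermonde_eq_prod_Ioi, partialVandermonde_eq_prod_Ioi, this, prod_insert (by simp)]

lemma rename_partialVandermonde_zero (σ : Perm (Fin n)) :
    rename σ (partialVandermonde R n 0) = (Perm.sign σ : ℤ) • partialVandermonde R n 0 := by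
  have hdet : partialVandermonde R n 0
      = (∏ i : Fin n, (-1) ^ #(Ioi i))
        * (Matrix.vandermonde (X : Fin n → MvPolynomial (Fin n) R)).det := by
    rw [partialVandermonde_eq_prod_Ioi, Matrix.det_vandermonde, ← prod_mul_distrib]
    refine prod_congr (by simp) fun i _ => ?_
    simp only [← prod_neg, neg_sub]
  have hmap : (rename σ : MvPolynomial (Fin n) R →ₐ[R] _).mapMatrix
      (Matrix.vandermonde X) = (Matrix.vandermonde X).submatrix σ id := by
    ext i j; simp [Matrix.vandermonde_apply]
  simp only [hdet, map_mul, map_prod, map_pow, map_neg, map_one]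
  rw [AlgHom.map_det, hmap, Matrix.det_permute, zsmul_eq_mul]
  ring

lemma partialVandermonde_ne_zero [IsDomain R] (c : ℕ) : partialVandermonde R n c ≠ 0 :=
  prod_ne_zero_iff.2 fun _ hp => sub_ne_zero.2 fun h =>
    (mem_filter.1 hp).2.2.ne (X_injective h)

lemma rename_partialVandermonde [IsDomain R] (hσ : σ ∈ fixingLT n c) :
    rename σ (partialVandermonde R n c) = (Perm.sign σ : ℤ) • partialVandermonde R n c := by
  set H : MvPolynomial (Fin n) R := ∏ i ∈ univ.filter (fun i : Fin n => ¬ c ≤ (i : ℕ)),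
    ∏ j ∈ Ioi i, (X i - X j) with hH
  have hsplit : partialVandermonde R n 0 = partialVandermonde R n c * H := by
    rw [partialVandermonde_eq_prod_Ioi, partialVandermonde_eq_prod_Ioi, hH,
      prod_filter_mul_prod_filter_not]
    simp
  have hH0 : H ≠ 0 := by
    have := partialVandermonde_ne_zero (R := R) (n := n) 0
    rw [hsplit] at this
    exact right_ne_zero_of_mul this
  -- `σ` only permutes the factors of `H`.
  have hHσ : rename σ H = H := by
    simp only [hH, map_prod, map_sub, rename_X]
    refine prod_congr rfl fun i hi => ?_
    have hi : (i : ℕ) < c := by simpa using hi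
    rw [mem_fixingLT.1 hσ i hi]
    refine prod_equiv σ (fun j => ?_) (fun _ _ => rfl)
    simp only [mem_Ioi, Fin.lt_def]
    by_cases hj : (j : ℕ) < c
    · rw [mem_fixingLT.1 hσ j hj]
    · have := le_apply_of_mem_fixingLT hσ (not_lt.1 hj)
      omega
  have h0 := rename_partialVandermonde_zero (R := R) σ
  rw [hsplit, map_mul, hHσ, ← smul_mul_assoc] at h0
  exact mul_right_cancel₀ hH0 h0

lemma partialVandermonde_eq_smul_rename_swap [IsDomain R] {a r : Fin n} (hr : a ≤ r) :
    partialVandermonde R n a = (Perm.sign (swap a r) : ℤ) •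
      ((∏ j ∈ (Ici a).erase r, (X r - X j))
        * rename (swap a r) (partialVandermonde R n (a + 1))) := by
  have h := rename_partialVandermonde (R := R) (swap_mem_fixingLT le_rfl hr)
  rw [partialVandermonde_succ, map_mul, map_prod] at h
  have hprod : ∏ j ∈ Ioi a, rename (swap a r) (X a - X j : MvPolynomial (Fin n) R)
      = ∏ j ∈ (Ici a).erase r, (X r - X j) := by
    refine prod_equiv (swap a r) (fun j => ?_) (fun j _ => by simp)
    rw [Fin.le_def] at hr
    simp only [mem_Ioi, mem_erase, mem_Ici, swap_apply_def, Fin.lt_def, Fin.le_def, ne_eq,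
      Fin.ext_iff]
    split_ifs <;> omega
  rw [hprod, ← partialVandermonde_succ] at h
  rw [h, smul_smul, ← Units.val_mul, Int.units_mul_self, Units.val_one, one_smul]

end Vandermonde

section WeylSymmetrizer

variable {R : Type*} [CommRing R] {n c : ℕ} {σ : Perm (Fin n)}

variable (R n) in
noncomputable def deltaMonomial (c : ℕ) : MvPolynomial (Fin n) R :=
  ∏ j : Fin n, X j ^ (if (j : ℕ) < c then 0 else n - 1 - (j : ℕ))

lemma deltaMonomial_eq (a : Fin n) :
    deltaMonomial R n a = X a ^ (n - 1 - a) * deltaMonomial R n (a + 1) := by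
  rw [deltaMonomial, deltaMonomial, Fintype.prod_eq_mul_prod_compl a,
    Fintype.prod_eq_mul_prod_compl a]
  simp only [lt_irrefl, if_false, Nat.lt_succ_self, if_true, pow_zero, one_mul]
  congr 1
  refine prod_congr rfl fun j hj => ?_
  have : (j : ℕ) ≠ a := fun h => (mem_compl.1 hj) (mem_singleton.2 (Fin.ext h))
  congr 2
  simp only [Nat.lt_succ_iff_lt_or_eq, this, or_false]

lemma IsWeylSym.mul_eq {W : MvPolynomial (Fin n) ℚ → MvPolynomial (Fin n) ℚ}
    (hW : IsWeylSym n c W) (f : MvPolynomial (Fin n) ℚ) :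
    partialVandermonde ℚ n c * W f = antisymmetrize ℚ c (deltaMonomial ℚ n c * f) :=
  hW f

lemma IsWeylSym.rename_apply {W : MvPolynomial (Fin n) ℚ → MvPolynomial (Fin n) ℚ}
    (hW : IsWeylSym n c W) (hσ : σ ∈ fixingLT n c) (f : MvPolynomial (Fin n) ℚ) :
    rename σ (W f) = W f := by
  have h := congrArg (rename σ) (hW.mul_eq f)
  rw [map_mul, rename_partialVandermonde hσ, rename_antisymmetrize hσ, ← hW.mul_eq f,
    smul_mul_assoc] at h
  exact mul_left_cancel₀ (partialVandermonde_ne_zero c)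
    (smul_right_injective _ (Units.ne_zero _) h)

end WeylSymmetrizer

section FractionField

variable {R : Type*} [CommRing R] [IsDomain R] {n : ℕ} {K : Type*} [Field K]
  [Algebra (MvPolynomial (Fin n) R) K] [IsFractionRing (MvPolynomial (Fin n) R) K]

lemma algebraMap_eq_dividedDifference_of_xi {a b : Fin n} (hab : a ≠ b) {S : Finset (Fin n)}
    (ha : a ∉ S) (hb : b ∉ S) {p : Fin n → MvPolynomial (Fin n) R}
    (hp : ∀ j ∈ insert a S, rename (swap a b) (p j) = p (swap a b j))
    {g g' : MvPolynomial (Fin n) R}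
    (hg' : (X a - X b) * g' = X a * g - X b * rename (swap a b) g)
    (hg : algebraMap _ K g = dividedDifference (algebraMap (MvPolynomial (Fin n) R) K ∘ X)
      (algebraMap _ K ∘ p) (insert a S)) :
    algebraMap _ K g' = dividedDifference (algebraMap (MvPolynomial (Fin n) R) K ∘ X)
      (algebraMap _ K ∘ (X * p)) (insert a (insert b S)) := by
  set ι := algebraMap (MvPolynomial (Fin n) R) K
  set φ : K ≃+* K := IsFractionRing.ringEquivOfRingEquiv
    (renameEquiv R (swap a b) : MvPolynomial (Fin n) R ≃ₐ[R] MvPolynomial (Fin n) R).toRingEquiv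
  have hφ : ∀ q, φ (ι q) = ι (rename (swap a b) q) :=
    IsFractionRing.ringEquivOfRingEquiv_algebraMap _
  have hSfix : S.map (swap a b).toEmbedding = S := by
    ext j
    rw [mem_map_equiv, symm_swap]
    by_cases hja : j = a
    · subst hja; simp [ha, hb]
    by_cases hjb : j = b
    · subst hjb; simp [ha, hb]
    rw [swap_apply_of_ne_of_ne hja hjb]
  have hs : ι (rename (swap a b) g) = dividedDifference (ι ∘ X) (ι ∘ p) (insert b S) := by
    rw [← hφ, hg, map_dividedDifference]
    have hx : φ ∘ (ι ∘ X) = (ι ∘ X) ∘ swap a b := by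
      funext j; simp [hφ]
    rw [hx, dividedDifference_congr _ (d' := (ι ∘ p) ∘ swap a b)
        fun j hj => by simp [hφ, hp j hj],
      ← dividedDifference_map_equiv, map_insert, hSfix]
    simp
  have hinj : Function.Injective (ι ∘ X) := (IsFractionRing.injective _ K).comp X_injective
  apply mul_left_cancel₀ (sub_ne_zero.2 (hinj.ne hab))
  have hxp : ι ∘ (X * p) = (ι ∘ X) * (ι ∘ p) := by funext j; simp
  rw [hxp, dividedDifference_insert_insert hinj ha hb hab, ← hg, ← hs]
  simpa using congrArg ι hg'

lemma algebraMap_foldl_xi_eq_dividedDifference (a : Fin n) {G : MvPolynomial (Fin n) R}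
    (hG : ∀ σ ∈ fixingLT n (a + 1), rename σ G = G)
    (xi : ℕ → MvPolynomial (Fin n) R → MvPolynomial (Fin n) R)
    (hxi : ∀ (a b : Fin n), (b : ℕ) = (a : ℕ) + 1 →
      ∀ g, (X a - X b) * xi (a : ℕ) g = X a * g - X b * rename (Equiv.swap a b) g)
    {t : ℕ} (hat : (a : ℕ) ≤ t) (ht : t < n) :
    algebraMap _ K ((List.range' a (t - a)).foldl (fun g m => xi m g) G)
      = dividedDifference (algebraMap (MvPolynomial (Fin n) R) K ∘ X)
          (algebraMap _ K ∘ fun r => X r ^ (t - a) * rename (swap a r) G)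
          (univ.filter fun j : Fin n => (a : ℕ) ≤ j ∧ (j : ℕ) ≤ t) := by
  induction t, hat using Nat.le_induction with
  | base =>
    have hT : (univ.filter fun j : Fin n => (a : ℕ) ≤ j ∧ (j : ℕ) ≤ a) = {a} := by
      ext j; simp [Fin.ext_iff]; omega
    rw [hT, dividedDifference_singleton]
    simp
  | succ t hat ih =>
    set a' : Fin n := ⟨t, by omega⟩
    set b' : Fin n := ⟨t + 1, ht⟩
    set S := univ.filter fun j : Fin n => (a : ℕ) ≤ j ∧ (j : ℕ) < t
    have hT : (univ.filter fun j : Fin n => (a : ℕ) ≤ j ∧ (j : ℕ) ≤ t) = insert a' S := by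
      ext j; simp [S, a', Fin.ext_iff]; omega
    have hT' : (univ.filter fun j : Fin n => (a : ℕ) ≤ j ∧ (j : ℕ) ≤ t + 1)
        = insert a' (insert b' S) := by
      ext j; simp [S, a', b', Fin.ext_iff]; omega
    have hfold : List.range' a (t + 1 - a) = List.range' a (t - a) ++ [t] := by
      rw [Nat.sub_add_comm hat, List.range'_concat]; congr; omega
    have hp : ∀ j ∈ insert a' S, rename (swap a' b') (X j ^ (t - a) * rename (swap a j) G)
        = X (swap a' b' j) ^ (t - a) * rename (swap a (swap a' b' j)) G := by
      intro j hj
      rw [map_mul, map_pow, rename_X]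
      congr 1
      rcases hat.lt_or_eq with hlt | heq
      · exact rename_rename_swap (swap_apply_of_ne_of_ne (by simp [a', Fin.ext_iff]; omega)
          (by simp [b', Fin.ext_iff]; omega)) (hG _ (swap_mem_fixingLT (by simp [a']; omega)
          (by simp [b']; omega))) j
      · have hj : j = a := by
          rw [← hT] at hj; simp at hj; omega
        have ha' : a' = a := Fin.ext heq.symm
        subst hj; rw [ha', swap_self, swap_apply_left, coe_refl, rename_id_apply]
    rw [hfold, List.foldl_append, List.foldl_cons, List.foldl_nil, hT',
      algebraMap_eq_dividedDifference_of_xi (by simp [a', b', Fin.ext_iff]) (by simp [S, a'])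
        (by simp [S, b']) hp (hxi a' b' rfl _) (by rw [ih (by omega), hT])]
    congr 2
    funext r
    simp only [Pi.mul_apply]
    rw [Nat.sub_add_comm hat, pow_succ]
    ring

lemma algebraMap_partialVandermonde_mul_dividedDifference (a : Fin n)
    {f G : MvPolynomial (Fin n) R} (hG : partialVandermonde R n (a + 1) * G
      = antisymmetrize R (a + 1) (deltaMonomial R n (a + 1) * f)) :
    algebraMap _ K (partialVandermonde R n a)
        * dividedDifference (algebraMap (MvPolynomial (Fin n) R) K ∘ X)
          (algebraMap _ K ∘ fun r => X r ^ (n - 1 - a) * rename (swap a r) G) (Ici a)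
      = algebraMap _ K (antisymmetrize R a (deltaMonomial R n a * f)) := by
  set ι := algebraMap (MvPolynomial (Fin n) R) K
  have hXa : ∀ σ ∈ fixingLT n (a + 1), rename σ (X a ^ (n - 1 - a) : MvPolynomial (Fin n) R)
      = X a ^ (n - 1 - a) := fun σ hσ => by
    rw [map_pow, rename_X, mem_fixingLT.1 hσ a (by simp)]
  rw [deltaMonomial_eq, mul_assoc, antisymmetrize_eq_sum_swap, map_sum, dividedDifference, mul_sum]
  refine sum_congr rfl fun r hr => ?_
  set P := ∏ j ∈ (Ici a).erase r, (X r - X j : MvPolynomial (Fin n) R)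
  have hP : ∏ j ∈ (Ici a).erase r, ((ι ∘ X) r - (ι ∘ X) j) = ι P := by simp [P, map_prod]
  have hP0 : ι P ≠ 0 := by
    rw [← hP]
    exact prod_ne_zero_iff.2 fun j hj => sub_ne_zero.2 fun h =>
      ne_of_mem_erase hj (X_injective (IsFractionRing.injective _ K h)).symm
  rw [antisymmetrize_mul_left hXa, ← hG, partialVandermonde_eq_smul_rename_swap (mem_Ici.1 hr),
    hP]
  field_simp
  simp only [Function.comp_apply, ← map_mul]
  congr 1
  simp only [map_mul, map_pow, rename_X, swap_apply_left, zsmul_eq_mul]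
  ring

end FractionField

/-- The paper's `ξ_{k+1}, …, ξ_{n-1}` (1-based variables) are `xi k, …, xi (n-2)` here, and the
fold applies `xi k` first. -/
theorem weyl_symmetrizer_recursion (n k : ℕ) (hk : k + 1 ≤ n)
    (Wk Wk1 : MvPolynomial (Fin n) ℚ → MvPolynomial (Fin n) ℚ)
    (hWk : IsWeylSym n k Wk) (hWk1 : IsWeylSym n (k+1) Wk1)
    (xi : ℕ → MvPolynomial (Fin n) ℚ → MvPolynomial (Fin n) ℚ)
    (hxi : ∀ (a b : Fin n), (b : ℕ) = (a : ℕ) + 1 →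
      ∀ g, (X a - X b) * xi (a : ℕ) g = X a * g - X b * rename (Equiv.swap a b) g)
    (f : MvPolynomial (Fin n) ℚ) :
    Wk f = (List.range' k (n - 1 - k)).foldl (fun g m => xi m g) (Wk1 f) := by
  set a : Fin n := ⟨k, by omega⟩
  let K := FractionRing (MvPolynomial (Fin n) ℚ)
  have hT : (univ.filter fun j : Fin n => (a : ℕ) ≤ j ∧ (j : ℕ) ≤ n - 1) = Ici a := by
    ext j; simp [a, Fin.le_def]; omega
  have hchain := algebraMap_foldl_xi_eq_dividedDifference (K := K) a
    (fun σ hσ => hWk1.rename_apply hσ f) xi hxi (t := n - 1) (by simp [a]; omega) (by omega)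
  apply IsFractionRing.injective (MvPolynomial (Fin n) ℚ) K
  apply mul_left_cancel₀ ((map_ne_zero_iff _ (IsFractionRing.injective _ K)).2
    (partialVandermonde_ne_zero (R := ℚ) (n := n) k))
  rw [← map_mul, hWk.mul_eq, hchain, hT,
    algebraMap_partialVandermonde_mul_dividedDifference a (hWk1.mul_eq f)]
end
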